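/- arXiv:2306.01535 — 3 statements merged into one kernel-verified Lean document; each statement's English description precedes it below -/
import Mathlib

section
/- Let α ≥ 0, η > 0, T ∈ ℝ, γ = √(α² + 2η²), and define B : ℝ → ℝ by B(t) = 2(e^{γ(T−t)} − 1) / ((α + γ)(e^{γ(T−t)} − 1) + 2γ). Then B is differentiable on ℝ, satisfies the Riccati ordinary differential equation B′(t) = (1/2)η² B(t)² + α B(t) − 1 for all t ∈ ℝ, and satisfies the terminal condition B(T) = 0. -/
/-!
With `E = e^{γ(T−t)}` and `D = (α + γ)(E − 1) + 2γ`, the quotient rule gives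
`B′ = −4γ²E / D²`, while clearing denominators in the right-hand side of the Riccati
equation leaves `2η²(E − 1)² + 2α(E − 1)D − D²`, which equals `−4γ²E` because
`γ² = α² + 2η²`. The denominator `D = (α + γ)E + (γ − α)` is positive because `γ > |α|`.
-/

open Real

namespace CIR

noncomputable def B (α γ T t : ℝ) : ℝ :=
  2 * (exp (γ * (T - t)) - 1) / ((α + γ) * (exp (γ * (T - t)) - 1) + 2 * γ)

theorem B_apply_self (α γ T : ℝ) : B α γ T T = 0 := by
  simp [B]

theorem denom_pos {α γ E : ℝ} (hαγ : |α| < γ) (hE : 0 < E) :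
    0 < (α + γ) * (E - 1) + 2 * γ := by
  have hαγ' := abs_lt.mp hαγ
  nlinarith [mul_pos (by linarith : 0 < α + γ) hE]

theorem abs_lt_sqrt_sq_add {α η : ℝ} (hη : η ≠ 0) : |α| < √(α ^ 2 + 2 * η ^ 2) := by
  rw [← sqrt_sq_eq_abs]
  exact sqrt_lt_sqrt (sq_nonneg α) (lt_add_of_pos_right _ (by positivity))

theorem hasDerivAt_B {α γ T t : ℝ} (hD : (α + γ) * (exp (γ * (T - t)) - 1) + 2 * γ ≠ 0) :
    HasDerivAt (B α γ T)
      (-4 * γ ^ 2 * exp (γ * (T - t)) / ((α + γ) * (exp (γ * (T - t)) - 1) + 2 * γ) ^ 2) t := by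
  have hE : HasDerivAt (fun s => exp (γ * (T - s))) (exp (γ * (T - t)) * -γ) t := by
    simpa using (((hasDerivAt_id t).const_sub T).const_mul γ).exp
  refine (((hE.sub_const 1).const_mul 2).div
    (((hE.sub_const 1).const_mul (α + γ)).add_const (2 * γ)) hD).congr_deriv ?_
  congr 1
  ring

theorem riccati_rhs_eq {α η γ E D : ℝ} (hγ : γ ^ 2 = α ^ 2 + 2 * η ^ 2)
    (hD : D = (α + γ) * (E - 1) + 2 * γ) (hD0 : D ≠ 0) :
    1 / 2 * η ^ 2 * (2 * (E - 1) / D) ^ 2 + α * (2 * (E - 1) / D) - 1 =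
      -4 * γ ^ 2 * E / D ^ 2 := by
  field_simp
  subst hD
  linear_combination (-(E - 1) ^ 2) * hγ

end CIR

theorem cir_B_riccati_general (α η T : ℝ) (hη : 0 < η)
    (γ : ℝ) (hγ : γ = Real.sqrt (α ^ 2 + 2 * η ^ 2)) (B : ℝ → ℝ)
    (hB : ∀ t : ℝ, B t = 2 * (Real.exp (γ * (T - t)) - 1) /
      ((α + γ) * (Real.exp (γ * (T - t)) - 1) + 2 * γ)) :
    (∀ t : ℝ, HasDerivAt B ((1 / 2) * η ^ 2 * (B t) ^ 2 + α * B t - 1) t) ∧ B T = 0 := by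
  obtain rfl : B = CIR.B α γ T := funext hB
  have hγsq : γ ^ 2 = α ^ 2 + 2 * η ^ 2 := hγ ▸ sq_sqrt (by positivity)
  have hαγ : |α| < γ := hγ ▸ CIR.abs_lt_sqrt_sq_add hη.ne'
  refine ⟨fun t => ?_, CIR.B_apply_self α γ T⟩
  have hD := (CIR.denom_pos hαγ (exp_pos (γ * (T - t)))).ne'
  rw [CIR.B, CIR.riccati_rhs_eq hγsq rfl hD]
  exact CIR.hasDerivAt_B hD

/-- The CIR coefficient `B(t) = 2(e^{γ(T−t)} − 1) / ((α + γ)(e^{γ(T−t)} − 1) + 2γ)`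
is differentiable on `ℝ`, satisfies the Riccati ODE
`B′(t) = (1/2)η² B(t)² + α B(t) − 1`, and the terminal condition `B(T) = 0`. -/
theorem cir_B_riccati (α η T : ℝ) (hα : 0 ≤ α) (hη : 0 < η)
    (γ : ℝ) (hγ : γ = Real.sqrt (α ^ 2 + 2 * η ^ 2)) (B : ℝ → ℝ)
    (hB : ∀ t : ℝ, B t = 2 * (Real.exp (γ * (T - t)) - 1) /
      ((α + γ) * (Real.exp (γ * (T - t)) - 1) + 2 * γ)) :
    (∀ t : ℝ, HasDerivAt B ((1 / 2) * η ^ 2 * (B t) ^ 2 + α * B t - 1) t) ∧ B T = 0 :=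
  cir_B_riccati_general α η T hη γ hγ B hB
end

section
/- Let α ≥ 0, β ∈ ℝ, η > 0, T ∈ ℝ, γ = √(α² + 2η²), and define B(t) = 2(e^{γ(T−t)} − 1) / ((α + γ)(e^{γ(T−t)} − 1) + 2γ) and A(t) = (2αβ/η²) · ln( 2γ e^{(γ+α)(T−t)/2} / ((α + γ)(e^{γ(T−t)} − 1) + 2γ) ). Then A is differentiable on ℝ, satisfies A′(t) = αβ B(t) for all t ∈ ℝ, and A(T) = 0. -/
/-!
Splitting the logarithm, `A(t) = (2αβ/η²)(log 2γ + (γ+α)(T−t)/2 − log D(t))` with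
`D(t) = (α+γ)(e^{γ(T−t)} − 1) + 2γ = (α+γ)e^{γ(T−t)} + (γ−α)`, which is positive because `|α| < γ`.
Differentiating, the bracket has derivative `(γ² − α²)(e^{γ(T−t)} − 1) / (2D(t))`, and
`γ² − α² = 2η²` turns `A′` into `αβ B`. At `t = T` the argument of the logarithm is `2γ/2γ = 1`.
-/

open Real

lemma Real.log_mul_exp_div {a D : ℝ} (ha : 0 < a) (hD : 0 < D) (x : ℝ) :
    log (a * exp x / D) = log a + x - log D := by
  rw [log_div (by positivity) hD.ne', log_mul ha.ne' (exp_pos x).ne', log_exp]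

section CIR

variable {α γ : ℝ} (T : ℝ)

lemma cir_denom_pos (h : |α| < γ) (t : ℝ) :
    0 < (α + γ) * (exp (γ * (T - t)) - 1) + 2 * γ := by
  obtain ⟨h₁, h₂⟩ := abs_lt.mp h
  have he := exp_pos (γ * (T - t))
  nlinarith

lemma hasDerivAt_log_cir_denom (h : |α| < γ) (t : ℝ) :
    HasDerivAt (fun t => log ((α + γ) * (exp (γ * (T - t)) - 1) + 2 * γ))
      (-((α + γ) * γ * exp (γ * (T - t))) /
        ((α + γ) * (exp (γ * (T - t)) - 1) + 2 * γ)) t := by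
  have hexp : HasDerivAt (fun t => exp (γ * (T - t))) (exp (γ * (T - t)) * (γ * -1)) t :=
    (((hasDerivAt_id t).const_sub T).const_mul γ).exp
  refine ((((hexp.sub_const 1).const_mul (α + γ)).add_const (2 * γ)).log
    (cir_denom_pos T h t).ne').congr_deriv ?_
  ring

lemma hasDerivAt_cir_log_bracket (h : |α| < γ) (t : ℝ) :
    HasDerivAt
      (fun t => log (2 * γ) + (γ + α) * (T - t) / 2 -
        log ((α + γ) * (exp (γ * (T - t)) - 1) + 2 * γ))
      ((γ ^ 2 - α ^ 2) * (exp (γ * (T - t)) - 1) /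
        (2 * ((α + γ) * (exp (γ * (T - t)) - 1) + 2 * γ))) t := by
  have hlin : HasDerivAt (fun t => log (2 * γ) + (γ + α) * (T - t) / 2) ((γ + α) * -1 / 2) t :=
    ((((hasDerivAt_id t).const_sub T).const_mul (γ + α)).div_const 2).const_add _
  refine (hlin.sub (hasDerivAt_log_cir_denom T h t)).congr_deriv ?_
  have hD := (cir_denom_pos T h t).ne'
  rw [div_sub_div _ _ two_ne_zero hD,
    div_eq_div_iff (mul_ne_zero two_ne_zero hD) (mul_ne_zero two_ne_zero hD)]
  ring

end CIR

theorem cir_A_ode_general (α β η T : ℝ) (hη : 0 < η)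
    (γ : ℝ) (hγ : γ = Real.sqrt (α ^ 2 + 2 * η ^ 2))
    (B A : ℝ → ℝ)
    (hB : ∀ t : ℝ, B t = 2 * (Real.exp (γ * (T - t)) - 1) /
      ((α + γ) * (Real.exp (γ * (T - t)) - 1) + 2 * γ))
    (hA : ∀ t : ℝ, A t = (2 * α * β / η ^ 2) *
      Real.log (2 * γ * Real.exp ((γ + α) * (T - t) / 2) /
        ((α + γ) * (Real.exp (γ * (T - t)) - 1) + 2 * γ))) :
    (∀ t : ℝ, HasDerivAt A (α * β * B t) t) ∧ A T = 0 := by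
  have hγ_sq : γ ^ 2 = α ^ 2 + 2 * η ^ 2 := by
    rw [hγ, sq_sqrt (by positivity)]
  have hγ_pos : 0 < γ := hγ ▸ sqrt_pos.mpr (by positivity)
  have hαγ : |α| < γ := abs_lt_of_sq_lt_sq (by nlinarith) hγ_pos.le
  have hA_split : A = fun t => (2 * α * β / η ^ 2) * (log (2 * γ) + (γ + α) * (T - t) / 2 -
      log ((α + γ) * (exp (γ * (T - t)) - 1) + 2 * γ)) := by
    funext t
    rw [hA t, log_mul_exp_div (by positivity) (cir_denom_pos T hαγ t)]
  refine ⟨fun t => ?_, ?_⟩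
  · rw [hA_split, hB t]
    refine ((hasDerivAt_cir_log_bracket T hαγ t).const_mul (2 * α * β / η ^ 2)).congr_deriv ?_
    rw [hγ_sq]
    field_simp
    ring
  · simp [hA T, hγ_pos.ne']

/-- The CIR coefficient `A(t) = (2αβ/η²) ln(2γ e^{(γ+α)(T−t)/2} / ((α+γ)(e^{γ(T−t)}−1)+2γ))`
is differentiable on `ℝ`, satisfies `A′(t) = αβ B(t)`, and `A(T) = 0`. -/
theorem cir_A_ode (α β η T : ℝ) (hα : 0 ≤ α) (hη : 0 < η)
    (γ : ℝ) (hγ : γ = Real.sqrt (α ^ 2 + 2 * η ^ 2))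
    (B A : ℝ → ℝ)
    (hB : ∀ t : ℝ, B t = 2 * (Real.exp (γ * (T - t)) - 1) /
      ((α + γ) * (Real.exp (γ * (T - t)) - 1) + 2 * γ))
    (hA : ∀ t : ℝ, A t = (2 * α * β / η ^ 2) *
      Real.log (2 * γ * Real.exp ((γ + α) * (T - t) / 2) /
        ((α + γ) * (Real.exp (γ * (T - t)) - 1) + 2 * γ))) :
    (∀ t : ℝ, HasDerivAt A (α * β * B t) t) ∧ A T = 0 :=
  cir_A_ode_general α β η T hη γ hγ B A hB hA
end

section
/- Let α ≥ 0, β ∈ ℝ, η > 0, T ∈ ℝ, γ = √(α² + 2η²), and define B(t) = 2(e^{γ(T−t)} − 1) / ((α + γ)(e^{γ(T−t)} − 1) + 2γ), A(t) = (2αβ/η²) · ln( 2γ e^{(γ+α)(T−t)/2} / ((α + γ)(e^{γ(T−t)} − 1) + 2γ) ), and Z(R,t) = exp(A(t) − B(t)R). Then for all R ∈ ℝ and t ∈ ℝ, Z satisfies the zero-coupon bond pricing partial differential equation ∂Z/∂t (R,t) + (1/2)η² R · ∂²Z/∂R² (R,t) + α(β − R) · ∂Z/∂R (R,t) − R·Z(R,t)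 = 0, together with the terminal condition Z(R,T) = 1 for every R ∈ ℝ. -/
/-!
Writing `Z = exp (A(t) − B(t) R)`, the bond PDE divided by `Z` is affine in `R`, so it holds
exactly when `B' = η²B²/2 + αB − 1` and `A' = αβB`. The closed form `B` solves this Riccati
equation because `γ² = α² + 2η²`, and `A` is `(2αβ/η²)` times the logarithm of a function whose
logarithmic derivative is `(η²/2) B`. The denominator
`(α + γ)(e^{γ(T−t)} − 1) + 2γ = (α + γ) e^{γ(T−t)} + (γ − α)` is positive since `|α| < γ`.
-/

open Real

theorem deriv_exp_const_sub_mul (a b : ℝ) :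
    deriv (fun r => exp (a - b * r)) = fun r => -b * exp (a - b * r) := by
  funext r
  have h : HasDerivAt (fun r => a - b * r) (-b) r := by
    simpa using ((hasDerivAt_id r).const_mul b).const_sub a
  simpa [mul_comm] using h.exp.deriv

theorem exp_sub_mul_solves_bond_pde {α β η R t : ℝ} {A B : ℝ → ℝ}
    (hB : HasDerivAt B (η ^ 2 / 2 * B t ^ 2 + α * B t - 1) t)
    (hA : HasDerivAt A (α * β * B t) t) :
    deriv (fun s => exp (A s - B s * R)) t
        + (1 / 2) * η ^ 2 * R * deriv (deriv (fun r => exp (A t - B t * r))) R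
        + α * (β - R) * deriv (fun r => exp (A t - B t * r)) R
        - R * exp (A t - B t * R) = 0 := by
  have hZt : HasDerivAt (fun s => exp (A s - B s * R))
      (exp (A t - B t * R) * (α * β * B t - (η ^ 2 / 2 * B t ^ 2 + α * B t - 1) * R)) t :=
    (hA.sub (hB.mul_const R)).exp
  have hZRR : deriv (fun r => -B t * exp (A t - B t * r)) R
      = B t ^ 2 * exp (A t - B t * R) := by
    rw [deriv_const_mul _ (by fun_prop), deriv_exp_const_sub_mul]
    ring
  rw [hZt.deriv, deriv_exp_const_sub_mul, hZRR]
  ring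

noncomputable section ClosedForm

variable (α β γ η T : ℝ)

def cirDenom (t : ℝ) : ℝ := (α + γ) * (exp (γ * (T - t)) - 1) + 2 * γ

def cirB (t : ℝ) : ℝ := 2 * (exp (γ * (T - t)) - 1) / cirDenom α γ T t

def cirA (t : ℝ) : ℝ :=
  (2 * α * β / η ^ 2) * log (2 * γ * exp ((γ + α) * (T - t) / 2) / cirDenom α γ T t)

variable {α β γ η T}

theorem cirDenom_pos (hαγ : |α| < γ) (t : ℝ) : 0 < cirDenom α γ T t := by
  obtain ⟨h₁, h₂⟩ := abs_lt.mp hαγ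
  have he := exp_pos (γ * (T - t))
  unfold cirDenom
  nlinarith [mul_pos (by linarith : 0 < α + γ) he]

theorem hasDerivAt_exp_mul_const_sub (t : ℝ) :
    HasDerivAt (fun t => exp (γ * (T - t))) (-γ * exp (γ * (T - t))) t := by
  have h : HasDerivAt (fun s => γ * (T - s)) (-γ) t := by
    simpa using ((hasDerivAt_id t).const_sub T).const_mul γ
  simpa [mul_comm] using h.exp

theorem hasDerivAt_cirDenom (t : ℝ) :
    HasDerivAt (cirDenom α γ T) ((α + γ) * (-γ * exp (γ * (T - t)))) t :=
  (((hasDerivAt_exp_mul_const_sub t).sub_const 1).const_mul (α + γ)).add_const _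

theorem hasDerivAt_cirB (hγ : γ ^ 2 = α ^ 2 + 2 * η ^ 2) {t : ℝ} (hD : cirDenom α γ T t ≠ 0) :
    HasDerivAt (cirB α γ T) (η ^ 2 / 2 * cirB α γ T t ^ 2 + α * cirB α γ T t - 1) t := by
  have hnum := ((hasDerivAt_exp_mul_const_sub (γ := γ) (T := T) t).sub_const 1).const_mul 2
  refine (hnum.div (hasDerivAt_cirDenom t) hD).congr_deriv ?_
  have hη : η ^ 2 = (γ ^ 2 - α ^ 2) / 2 := by linarith
  unfold cirB
  unfold cirDenom at hD ⊢
  rw [hη]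
  field_simp
  ring

theorem hasDerivAt_cirA (hγ : γ ^ 2 = α ^ 2 + 2 * η ^ 2) (hγ₀ : γ ≠ 0) (hη : η ≠ 0) {t : ℝ}
    (hD : cirDenom α γ T t ≠ 0) :
    HasDerivAt (cirA α β γ η T) (α * β * cirB α γ T t) t := by
  have hlin : HasDerivAt (fun s => (γ + α) * (T - s) / 2) (-(γ + α) / 2) t := by
    simpa using (((hasDerivAt_id t).const_sub T).const_mul (γ + α)).div_const 2
  have hnum := hlin.exp.const_mul (2 * γ)
  have hquot := hnum.div (hasDerivAt_cirDenom t) hD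
  have hne : 2 * γ * exp ((γ + α) * (T - t) / 2) / cirDenom α γ T t ≠ 0 := by
    have := exp_pos ((γ + α) * (T - t) / 2)
    positivity
  refine ((hquot.log hne).const_mul (2 * α * β / η ^ 2)).congr_deriv ?_
  have hη2 : η ^ 2 = (γ ^ 2 - α ^ 2) / 2 := by linarith
  have hγα : γ ^ 2 - α ^ 2 ≠ 0 := by
    rw [show γ ^ 2 - α ^ 2 = 2 * η ^ 2 by linarith]
    positivity
  have hE := (exp_pos ((γ + α) * (T - t) / 2)).ne'
  simp only [Pi.div_apply, cirB]
  unfold cirDenom at hD ⊢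
  generalize exp ((γ + α) * (T - t) / 2) = E at *
  rw [hη2]
  field_simp
  ring

theorem cirB_self : cirB α γ T T = 0 := by simp [cirB]

theorem cirA_self : cirA α β γ η T T = 0 := by
  rcases eq_or_ne γ 0 with rfl | hγ <;> simp [cirA, cirDenom, *]

end ClosedForm

theorem cir_bond_pde_general (α β η T : ℝ) (hη : 0 < η)
    (γ : ℝ) (hγ : γ = Real.sqrt (α ^ 2 + 2 * η ^ 2))
    (B A : ℝ → ℝ) (Z : ℝ → ℝ → ℝ)
    (hB : ∀ t : ℝ, B t = 2 * (Real.exp (γ * (T - t)) - 1) /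
      ((α + γ) * (Real.exp (γ * (T - t)) - 1) + 2 * γ))
    (hA : ∀ t : ℝ, A t = (2 * α * β / η ^ 2) *
      Real.log (2 * γ * Real.exp ((γ + α) * (T - t) / 2) /
        ((α + γ) * (Real.exp (γ * (T - t)) - 1) + 2 * γ)))
    (hZ : ∀ R t : ℝ, Z R t = Real.exp (A t - B t * R)) :
    (∀ R t : ℝ,
        deriv (fun s => Z R s) t
          + (1 / 2) * η ^ 2 * R * deriv (deriv (fun r => Z r t)) R
          + α * (β - R) * deriv (fun r => Z r t) R
          - R * Z R t = 0) ∧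
      ∀ R : ℝ, Z R T = 1 := by
  have hγsq : γ ^ 2 = α ^ 2 + 2 * η ^ 2 := by rw [hγ]; exact sq_sqrt (by positivity)
  have hαγ : |α| < γ := by
    rw [hγ, lt_sqrt (abs_nonneg α), sq_abs]
    nlinarith
  have hγ₀ : γ ≠ 0 := ((abs_nonneg α).trans_lt hαγ).ne'
  obtain rfl : B = cirB α γ T := funext hB
  obtain rfl : A = cirA α β γ η T := funext hA
  obtain rfl : Z = fun R t => exp (cirA α β γ η T t - cirB α γ T t * R) := funext₂ hZ
  refine ⟨fun R t => ?_, fun R => by simp [cirA_self, cirB_self]⟩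
  have hD := (cirDenom_pos (T := T) hαγ t).ne'
  exact exp_sub_mul_solves_bond_pde (hasDerivAt_cirB hγsq hD) (hasDerivAt_cirA hγsq hγ₀ hη.ne' hD)

/-- The closed form `Z(R,t) = exp(A(t) − B(t)R)` solves the Cox–Ingersoll–Ross
zero-coupon bond PDE `∂Z/∂t + (1/2)η²R ∂²Z/∂R² + α(β − R) ∂Z/∂R − RZ = 0`
with terminal condition `Z(R,T) = 1`. -/
theorem cir_bond_pde (α β η T : ℝ) (hα : 0 ≤ α) (hη : 0 < η)
    (γ : ℝ) (hγ : γ = Real.sqrt (α ^ 2 + 2 * η ^ 2))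
    (B A : ℝ → ℝ) (Z : ℝ → ℝ → ℝ)
    (hB : ∀ t : ℝ, B t = 2 * (Real.exp (γ * (T - t)) - 1) /
      ((α + γ) * (Real.exp (γ * (T - t)) - 1) + 2 * γ))
    (hA : ∀ t : ℝ, A t = (2 * α * β / η ^ 2) *
      Real.log (2 * γ * Real.exp ((γ + α) * (T - t) / 2) /
        ((α + γ) * (Real.exp (γ * (T - t)) - 1) + 2 * γ)))
    (hZ : ∀ R t : ℝ, Z R t = Real.exp (A t - B t * R)) :
    (∀ R t : ℝ,
        deriv (fun s => Z R s) t
          + (1 / 2) * η ^ 2 * R * deriv (deriv (fun r => Z r t)) R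
          + α * (β - R) * deriv (fun r => Z r t) R
          - R * Z R t = 0) ∧
      ∀ R : ℝ, Z R T = 1 :=
  cir_bond_pde_general α β η T hη γ hγ B A Z hB hA hZ
end
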